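/- For n ≥ 2, the residue at w = 0 of (1+w)^n / (w^{n-2}(1+nw)) equals (n−2)(n+1)/(2n) + (1 − (1−n)^n)/n³. -/

import Mathlib

/-!
Since `(1 + n w)⁻¹ = ∑ (-n)ᵏ wᵏ`, the residue is the coefficient
`∑_{i ≤ n-3} C(n,i) (-n)^(n-3-i)` of `w^(n-3)` in `(1 + w)ⁿ / (1 + n w)`. Multiplied by `(-n)³`
this sum becomes the binomial expansion of `(1 - n)ⁿ` without its three terms of lowest degree
in `n`, so it equals `((1 - n)ⁿ - 1 + n² - C(n,2) n²) / (-n³)`.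
-/

open PowerSeries
open scoped LaurentSeries

namespace PowerSeries

theorem one_add_C_mul_X_mul_mk_pow {R : Type*} [CommRing R] (c : R) :
    (1 + C c * X) * mk (fun k => (-c) ^ k) = 1 := by
  have h := congrArg (rescale (-c)) (mk_one_mul_one_sub_eq_one (S := R))
  rw [map_mul, map_sub, rescale_X, rescale_mk] at h
  simpa [mul_comm, sub_eq_add_neg] using h

theorem coeff_one_add_X_pow {R : Type*} [Semiring R] (n i : ℕ) :
    coeff i ((1 + X : R⟦X⟧) ^ n) = n.choose i := by
  have h : (1 + X : R⟦X⟧) ^ n = ((1 + Polynomial.X) ^ n : Polynomial R) := by simp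
  rw [h, Polynomial.coeff_coe, Polynomial.coeff_one_add_X_pow]

theorem coeff_one_add_X_pow_mul_mk_pow {R : Type*} [Semiring R] (y : R) (n m : ℕ) :
    coeff m ((1 + X) ^ n * mk (fun k => y ^ k)) =
      ∑ i ∈ Finset.range (m + 1), (n.choose i : R) * y ^ (m - i) := by
  rw [coeff_mul, Finset.Nat.sum_antidiagonal_eq_sum_range_succ
    (fun i j => coeff i ((1 + X : R⟦X⟧) ^ n) * coeff j (mk fun k => y ^ k))]
  simp only [coeff_mk, coeff_one_add_X_pow]

end PowerSeries

theorem LaurentSeries.coe_div_single_pow_mul_of_mul_eq_one {F : Type*} [Field F]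
    (f g h : F⟦X⟧) (hgh : g * h = 1) (k : ℕ) :
    (f : F⸨X⸩) / (HahnSeries.single 1 1 ^ k * (g : F⸨X⸩)) =
      HahnSeries.single (-(k : ℤ)) 1 * ((f * h : F⟦X⟧) : F⸨X⸩) := by
  have hg : (g : F⸨X⸩) * h = 1 := by rw [← PowerSeries.coe_mul, hgh, PowerSeries.coe_one]
  rw [div_eq_iff (mul_ne_zero (pow_ne_zero _ (HahnSeries.single_ne_zero one_ne_zero))
    (left_ne_zero_of_mul_eq_one hg)), HahnSeries.single_pow, PowerSeries.coe_mul]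
  symm
  calc HahnSeries.single (-(k : ℤ)) (1 : F) * ((f : F⸨X⸩) * (h : F⸨X⸩)) *
        (HahnSeries.single (k • 1) (1 ^ k) * (g : F⸨X⸩))
      = HahnSeries.single (-(k : ℤ) + k • 1) (1 * 1 ^ k) *
          ((f : F⸨X⸩) * ((g : F⸨X⸩) * (h : F⸨X⸩))) := by
        rw [← HahnSeries.single_mul_single]; ring
    _ = (f : F⸨X⸩) := by simp [hg]

theorem pow_three_mul_sum_range_choose_mul_pow {R : Type*} [CommRing R] (y : R) (m : ℕ) :
    y ^ 3 * ∑ i ∈ Finset.range (m + 1), ((m + 3).choose i : R) * y ^ (m - i) =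
      (1 + y) ^ (m + 3) - (1 + (m + 3 : ℕ) * y + ((m + 3).choose 2 : ℕ) * y ^ 2) := by
  have hlow : ∑ i ∈ Finset.range (m + 1), 1 ^ i * y ^ (m + 3 - i) * ((m + 3).choose i : R) =
      y ^ 3 * ∑ i ∈ Finset.range (m + 1), ((m + 3).choose i : R) * y ^ (m - i) := by
    rw [Finset.mul_sum]
    refine Finset.sum_congr rfl fun i hi => ?_
    rw [show m + 3 - i = 3 + (m - i) by have := Finset.mem_range.mp hi; omega]
    ring
  have hexp := add_pow (1 : R) y (m + 3)
  rw [Finset.sum_range_succ, Finset.sum_range_succ, Finset.sum_range_succ, hlow] at hexp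
  have h2 : (m + 3).choose (m + 1) = (m + 3).choose 2 := Nat.choose_symm_add (a := m + 1) (b := 2)
  have h1 : (m + 3).choose (m + 2) = m + 3 := Nat.choose_succ_self_right _
  simp only [one_pow, one_mul, Nat.choose_self, h1, h2, Nat.cast_one, mul_one,
    show m + 3 - (m + 1) = 2 by omega, show m + 3 - (m + 2) = 1 by omega, Nat.sub_self] at hexp
  linear_combination -hexp

/-- For `n ≥ 2`, the residue at `w = 0` of
`(1+w)^n / (w^{n-2}(1+nw))` (the coefficient of `w^{-1}` in the Laurent expansion at `0`)
equals `(n−2)(n+1)/(2n) + (1 − (1−n)^n)/n³`. -/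
theorem residue_eps1_hypersurface (n : ℕ) (hn : 2 ≤ n) :
    (((((1 + RatFunc.X) ^ n /
          (RatFunc.X ^ (n - 2) * (1 + (n : RatFunc ℚ) * RatFunc.X))) : RatFunc ℚ) :
        LaurentSeries ℚ)).coeff (-1)
      = ((n : ℚ) - 2) * ((n : ℚ) + 1) / (2 * n) + (1 - (1 - (n : ℚ)) ^ n) / (n : ℚ) ^ 3 := by
  have hexpand : ((((1 + RatFunc.X) ^ n /
          (RatFunc.X ^ (n - 2) * (1 + (n : RatFunc ℚ) * RatFunc.X))) : RatFunc ℚ) : ℚ⸨X⸩) =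
      HahnSeries.single (-((n - 2 : ℕ) : ℤ)) 1 *
        (((1 + X : ℚ⟦X⟧) ^ n * mk fun k => (-(n : ℚ)) ^ k : ℚ⟦X⟧) : ℚ⸨X⸩) := by
    rw [← LaurentSeries.coe_div_single_pow_mul_of_mul_eq_one _ _ _
      (one_add_C_mul_X_mul_mk_pow (n : ℚ))]
    simp [map_natCast]
  rw [hexpand]
  obtain ⟨k, rfl⟩ : ∃ k, n = k + 2 := ⟨n - 2, by omega⟩
  rcases k with _ | m
  · rw [Nat.sub_self, Nat.cast_zero, neg_zero, HahnSeries.single_zero_one, one_mul,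
      PowerSeries.coeff_coe, if_pos (by norm_num)]
    norm_num
  · rw [show m + 1 + 2 = m + 3 from rfl, show (-1 : ℤ) = m + -((m + 3 - 2 : ℕ) : ℤ) by omega,
      HahnSeries.coeff_single_mul_add, one_mul, LaurentSeries.coeff_coe_powerSeries,
      coeff_one_add_X_pow_mul_mk_pow]
    have hsum := pow_three_mul_sum_range_choose_mul_pow (-((m + 3 : ℕ) : ℚ)) m
    have hN : ((m + 3 : ℕ) : ℚ) ≠ 0 := by positivity
    rw [Nat.cast_choose_two] at hsum
    field_simp
    linear_combination -2 * hsum
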